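/- arXiv:math/0404175 — 2 statements merged into one kernel-verified Lean document; each statement's English description precedes it below -/
import Mathlib

section
/- A finite-rank linear projector P on Π(ℝ^d) is of minimal degree (i.e., dim(G ∩ Π_{<k}) ≤ dim(ran P ∩ Π_{<k}) for all k and all subspaces G correct for ⊥ker P) if and only if dim(ran P ∩ Π_{<k}) + dim(⊥ker P ∩ ⊥Π_{<k}) = dim(ran P) for all k. -/
/-!
Both conditions say that `dim (ran P ∩ Π_{<k}) = dim P(Π_{<k})` for every `k`.
A subspace is correct for `⊥ker P` exactly when it is a complement of `ker P`; `P` is injective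
on such a complement `G`, so `dim (G ∩ Π_{<k}) ≤ dim P(Π_{<k})`, with equality for a complement
chosen through a complement of `ker P ∩ Π_{<k}` in `Π_{<k}`; and `ran P ∩ Π_{<k} ⊆ P(Π_{<k})`
because `P` fixes its range. On the dual side, `⊥ker P ∩ ⊥Π_{<k} = ⊥(Π_{<k} + ker P)` is the
annihilator of `P(Π_{<k})` in the dual of `ran P`, of dimension `dim ran P - dim P(Π_{<k})`.
-/

open MvPolynomial Finset

noncomputable section

/-- The multi-index on the first (`x`) block of variables of a monomial in `Fin d ⊕ Fin d`. -/
def xpart {d : ℕ} (m : (Fin d ⊕ Fin d) →₀ ℕ) : Fin d →₀ ℕ :=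
  Finsupp.equivFunOnFinite.symm fun i => m (Sum.inl i)

/-- The multi-index on the second (`y`) block of variables. -/
def ypart {d : ℕ} (m : (Fin d ⊕ Fin d) →₀ ℕ) : Fin d →₀ ℕ :=
  Finsupp.equivFunOnFinite.symm fun i => m (Sum.inr i)

/-- `(l ⊗ m) f`: apply `l` in the `x`-variables and `m` in the `y`-variables of a
two-block polynomial `f`, via its canonical representation as a sum of products
of monomials in `x` and monomials in `y`. -/
def tensorApply {d : ℕ} (l m : Module.Dual ℝ (MvPolynomial (Fin d) ℝ))
    (f : MvPolynomial (Fin d ⊕ Fin d) ℝ) : ℝ :=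
  ∑ mo ∈ f.support, f.coeff mo * l (monomial (xpart mo) 1) * m (monomial (ypart mo) 1)

/-- Apply the linear functional `l` in the second (`y`) block of variables,
yielding a polynomial in the first (`x`) block of variables. -/
def applySecond {d : ℕ} (l : Module.Dual ℝ (MvPolynomial (Fin d) ℝ))
    (f : MvPolynomial (Fin d ⊕ Fin d) ℝ) : MvPolynomial (Fin d) ℝ :=
  ∑ mo ∈ f.support, monomial (xpart mo) (f.coeff mo * l (monomial (ypart mo) 1))

/-- The polynomial `(x,y) ↦ ‖x-y‖^(2k)` in the `2d` variables `x(1),…,x(d),y(1),…,y(d)`. -/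
def distPoly (d k : ℕ) : MvPolynomial (Fin d ⊕ Fin d) ℝ :=
  (∑ i : Fin d, (X (Sum.inl i) - X (Sum.inr i)) ^ 2) ^ k

/-- `l` vanishes on all polynomials of total degree `< k` (i.e. `l ⊥ Π_{<k}`). -/
def VanishesLT {d : ℕ} (l : Module.Dual ℝ (MvPolynomial (Fin d) ℝ)) (k : ℕ) : Prop :=
  ∀ p : MvPolynomial (Fin d) ℝ, p.totalDegree < k → l p = 0

/-- `l` vanishes on all polynomials of total degree `≤ k` (i.e. `l ⊥ Π_{≤k}`). -/
def VanishesLE {d : ℕ} (l : Module.Dual ℝ (MvPolynomial (Fin d) ℝ)) (k : ℕ) : Prop :=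
  ∀ p : MvPolynomial (Fin d) ℝ, p.totalDegree ≤ k → l p = 0

/-- `p_{a,β} : x ↦ ‖x‖^(2a) x^β` as a polynomial. -/
def pPoly (d : ℕ) (a : ℕ) (β : Fin d →₀ ℕ) : MvPolynomial (Fin d) ℝ :=
  (∑ i : Fin d, X i ^ 2) ^ a * monomial β 1

/-- `⊥Π_{<k}`: the subspace of linear functionals vanishing on all polynomials
of total degree `< k`. -/
def perpLT (d k : ℕ) : Submodule ℝ (Module.Dual ℝ (MvPolynomial (Fin d) ℝ)) where
  carrier := {l | VanishesLT l k}
  zero_mem' := fun _ _ => rfl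
  add_mem' := fun {a b} ha hb p hp => by
    simp [LinearMap.add_apply, ha p hp, hb p hp]
  smul_mem' := fun c l hl p hp => by
    simp [LinearMap.smul_apply, hl p hp]

/-- `Π_{<k}`: the subspace of polynomials of total degree `< k`. -/
def degLT (d k : ℕ) : Submodule ℝ (MvPolynomial (Fin d) ℝ) where
  carrier := {p | ∀ m ∈ p.support, (m.sum fun _ e => e) < k}
  zero_mem' := by simp
  add_mem' := fun {a b} ha hb m hm => by
    rcases Finset.mem_union.mp (MvPolynomial.support_add hm) with h | h
    · exact ha m h
    · exact hb m h
  smul_mem' := fun c p hp m hm => hp m (MvPolynomial.support_smul hm)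

open Module LinearMap Submodule

section ModularLattice

variable {α : Type*} [Lattice α] [BoundedOrder α] [IsModularLattice α] [ComplementedLattice α]

theorem exists_isCompl_le_inf_sup (a b : α) : ∃ c, IsCompl c b ∧ a ≤ c ⊓ a ⊔ b := by
  obtain ⟨c₀, hc₀⟩ := exists_isCompl (a ⊓ b)
  have hdisj : Disjoint (c₀ ⊓ a) b := by
    rw [disjoint_iff, inf_assoc]; exact hc₀.symm.inf_eq_bot
  have ha : a ≤ c₀ ⊓ a ⊔ b := by
    calc a = ((a ⊓ b) ⊔ c₀) ⊓ a := by rw [hc₀.sup_eq_top, top_inf_eq]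
      _ = a ⊓ b ⊔ c₀ ⊓ a := sup_inf_assoc_of_le c₀ inf_le_left
      _ ≤ c₀ ⊓ a ⊔ b := sup_le (inf_le_right.trans le_sup_right) le_sup_left
  obtain ⟨c, hle, hc⟩ := hdisj.exists_isCompl
  exact ⟨c, hc, ha.trans (sup_le_sup_right (le_inf hle inf_le_right) b)⟩

end ModularLattice

section VectorSpace

variable {K V W : Type*} [Field K] [AddCommGroup V] [Module K V] [AddCommGroup W] [Module K W]

def IsCorrectFor (G : Submodule K V) (M : Submodule K (Dual K V)) : Prop :=
  ∀ p : V, ∃! f, f ∈ G ∧ ∀ μ ∈ M, μ f = μ p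

theorem isCorrectFor_dualAnnihilator_iff {G N : Submodule K V} :
    IsCorrectFor G N.dualAnnihilator ↔ IsCompl G N := by
  have agree (f p : V) : (∀ μ ∈ N.dualAnnihilator, μ f = μ p) ↔ f - p ∈ N := by
    rw [← Subspace.forall_mem_dualAnnihilator_apply_eq_zero_iff]
    simp only [map_sub, sub_eq_zero]
  simp only [IsCorrectFor, agree]
  refine ⟨fun h => ⟨disjoint_def.2 fun x hxG hxN => ?_, codisjoint_iff_exists_add_eq.2 fun p => ?_⟩,
    fun h p => ?_⟩
  · obtain ⟨f, -, huniq⟩ := h 0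
    rw [huniq x ⟨hxG, by simpa using hxN⟩, ← huniq 0 ⟨G.zero_mem, by simp⟩]
  · obtain ⟨f, ⟨hfG, hfN⟩, -⟩ := h p
    exact ⟨f, -(f - p), hfG, N.neg_mem hfN, by abel⟩
  · obtain ⟨g, n, hgG, hnN, rfl⟩ := codisjoint_iff_exists_add_eq.1 h.codisjoint p
    refine ⟨g, ⟨hgG, by simpa using N.neg_mem hnN⟩, fun f ⟨hfG, hfN⟩ => ?_⟩
    have hfg : f - g ∈ G ⊓ N :=
      ⟨G.sub_mem hfG hgG, by simpa [sub_add_eq_sub_sub] using N.add_mem hfN hnN⟩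
    rwa [h.inf_eq_bot, mem_bot, sub_eq_zero] at hfg

theorem Submodule.finrank_map_eq_of_disjoint_ker {f : V →ₗ[K] W} {G : Submodule K V}
    (h : Disjoint G (ker f)) : finrank K (G.map f) = finrank K G := by
  rw [← range_domRestrict]
  exact finrank_range_of_inj (injective_domRestrict_iff.2 h)

theorem Submodule.finrank_inf_le_finrank_map {f : V →ₗ[K] W} [FiniteDimensional K (range f)]
    {G : Submodule K V} (h : Disjoint G (ker f)) (D : Submodule K V) :
    finrank K ↥(G ⊓ D) ≤ finrank K (D.map f) := by
  have : FiniteDimensional K (D.map f) := finiteDimensional_of_le map_le_range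
  rw [← finrank_map_eq_of_disjoint_ker (h.mono_left inf_le_left)]
  exact finrank_mono (map_mono inf_le_right)

theorem LinearMap.exists_isCompl_ker_finrank_inf_eq (f : V →ₗ[K] W) (D : Submodule K V) :
    ∃ G, IsCompl G (ker f) ∧ finrank K ↥(G ⊓ D) = finrank K (D.map f) := by
  obtain ⟨G, hG, hD⟩ := exists_isCompl_le_inf_sup D (ker f)
  have hmap : (G ⊓ D).map f = D.map f :=
    le_antisymm (map_mono inf_le_right) (map_le_iff_le_comap.2 (comap_map_eq f _ ▸ hD))
  exact ⟨G, hG, hmap ▸ (finrank_map_eq_of_disjoint_ker (hG.disjoint.mono_left inf_le_left)).symm⟩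

theorem Submodule.dualAnnihilator_comap_eq_map_dualMap {f : V →ₗ[K] W}
    (hf : Function.Surjective f) (U : Submodule K W) :
    (U.comap f).dualAnnihilator = U.dualAnnihilator.map f.dualMap := by
  refine le_antisymm (fun φ hφ => ?_) (dualAnnihilator_map_dualMap_le U f)
  have hker : φ ∈ (ker f).dualAnnihilator :=
    dualAnnihilator_anti (fun v hv => by simp [mem_ker.1 hv]) hφ
  obtain ⟨ψ, rfl⟩ := range_dualMap_eq_dualAnnihilator_ker_of_surjective f hf ▸ hker
  refine ⟨ψ, (mem_dualAnnihilator ψ).2 fun w hw => ?_, rfl⟩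
  obtain ⟨v, rfl⟩ := hf w
  exact (mem_dualAnnihilator _).1 hφ v hw

theorem LinearMap.finrank_dualAnnihilator_sup_ker_add_finrank_map (f : V →ₗ[K] W)
    [FiniteDimensional K (range f)] (D : Submodule K V) :
    finrank K (D ⊔ ker f).dualAnnihilator + finrank K (D.map f) = finrank K (range f) := by
  -- `D ⊔ ker f` is the preimage of `f(D)` under the surjection `g` onto `range f`.
  set g := f.rangeRestrict
  have hg : Function.Surjective g := range_eq_top.1 f.range_rangeRestrict
  have hcomap : (D.map g).comap g = D ⊔ ker f := by rw [comap_map_eq, ker_rangeRestrict]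
  have hmap : D.map f = (D.map g).map (range f).subtype := by
    rw [← map_comp, subtype_comp_codRestrict]
  rw [← hcomap, dualAnnihilator_comap_eq_map_dualMap hg, hmap, finrank_map_subtype_eq,
    finrank_map_eq_of_disjoint_ker
      (disjoint_ker_iff_injOn.2 (dualMap_injective_of_surjective hg).injOn), add_comm]
  exact Subspace.finrank_add_finrank_dualAnnihilator_eq _

theorem LinearMap.finrank_range_inf_le_finrank_map {P : V →ₗ[K] V} (hP : IsIdempotentElem P)
    [FiniteDimensional K (range P)] (D : Submodule K V) :
    finrank K ↥(range P ⊓ D) ≤ finrank K (D.map P) := by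
  have : FiniteDimensional K (D.map P) := finiteDimensional_of_le map_le_range
  exact finrank_mono fun x ⟨hxP, hxD⟩ => ⟨x, hxD, hP.mem_range_iff.1 hxP⟩

end VectorSpace

theorem perpLT_eq_dualAnnihilator (d k : ℕ) : perpLT d k = (degLT d k).dualAnnihilator := by
  ext l
  refine ⟨fun hl => (mem_dualAnnihilator l).2 fun p hp => ?_, fun hl p hp => ?_⟩
  · rw [p.as_sum, map_sum]
    exact Finset.sum_eq_zero fun m hm =>
      hl _ ((totalDegree_monomial_le m _).trans_lt (hp m hm))
  · exact (mem_dualAnnihilator l).1 hl p fun m hm => (le_totalDegree hm).trans_lt hp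

/-- A finite-rank linear projector `P` on `Π` is of minimal degree — i.e.
`dim(G ∩ Π_{<k}) ≤ dim(ran P ∩ Π_{<k})` for all `k` and all subspaces `G` correct for
`⊥ker P` — if and only if
`dim(ran P ∩ Π_{<k}) + dim(⊥ker P ∩ ⊥Π_{<k}) = dim(ran P)` for all `k`. -/
theorem minimal_degree_iff (d : ℕ)
    (P : MvPolynomial (Fin d) ℝ →ₗ[ℝ] MvPolynomial (Fin d) ℝ)
    (hproj : P ∘ₗ P = P)
    (hfin : FiniteDimensional ℝ ↥(LinearMap.range P)) :
    (∀ G : Submodule ℝ (MvPolynomial (Fin d) ℝ),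
        (∀ p : MvPolynomial (Fin d) ℝ,
          ∃! f, f ∈ G ∧ ∀ μ ∈ (LinearMap.ker P).dualAnnihilator, μ f = μ p) →
        ∀ k : ℕ, Module.finrank ℝ ↥(G ⊓ degLT d k) ≤
          Module.finrank ℝ ↥(LinearMap.range P ⊓ degLT d k)) ↔
      (∀ k : ℕ,
        Module.finrank ℝ ↥(LinearMap.range P ⊓ degLT d k) +
            Module.finrank ℝ ↥((LinearMap.ker P).dualAnnihilator ⊓ perpLT d k) =
          Module.finrank ℝ ↥(LinearMap.range P)) := by
  have hdual (k : ℕ) : finrank ℝ ↥((ker P).dualAnnihilator ⊓ perpLT d k) +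
      finrank ℝ ((degLT d k).map P) = finrank ℝ (range P) := by
    rw [perpLT_eq_dualAnnihilator, ← dualAnnihilator_sup_eq, sup_comm]
    exact finrank_dualAnnihilator_sup_ker_add_finrank_map P _
  have hrange (k : ℕ) := finrank_range_inf_le_finrank_map hproj (degLT d k)
  constructor
  · intro hmin k
    obtain ⟨G, hG, hGk⟩ := exists_isCompl_ker_finrank_inf_eq P (degLT d k)
    have := hmin G (isCorrectFor_dualAnnihilator_iff.2 hG) k
    linarith [hdual k, hrange k]
  · intro hdim G hG k
    have := finrank_inf_le_finrank_map (isCorrectFor_dualAnnihilator_iff.1 hG).disjoint (degLT d k)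
    linarith [hdual k, hrange k, hdim k]
end
end

section
/- Let λ be a linear functional on Π(ℝ^d) of order κ := max{k : λ vanishes on Π_{<k}} (λ ≠ 0). Then the leading (degree-κ homogeneous) part of the polynomial x ↦ λ‖x−·‖^(2κ) equals (−1)^κ ∑_{b: κ−b even} 2^b · κ!/(((κ−b)/2)!)² · ∑_{|β|=b} (λ p_{(κ−b)/2,β}) · ‖x‖^(κ−b) x^β / β!, a nonzero homogeneous polynomial of degree κ; here ‖x‖^(κ−b) means ‖x‖^(2·(κ−b)/2) with (κ−b)/2 ∈ ℤ₊, and p_{a,β}(x) = ‖x‖^(2a)x^β. -/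
open MvPolynomial Finset

noncomputable section

/-!
Expanding `‖x - y‖² = ‖x‖² + ‖y‖² - 2⟨x, y⟩` by the binomial and multinomial theorems writes
`‖x - y‖^(2κ)` as a combination of products `p_{a,β}(x) p_{a',β}(y)`, where `p_{a,β}` is
homogeneous of degree `2a + |β|` and `2a + 2a' + 2|β| = 2κ`. Applying `λ` in `y` and keeping the
part of `x`-degree `κ` forces `2a + |β| = κ`, hence `a' = a`, which gives the formula.
Applying `λ` once more to this leading part yields `(-1)^κ` times a positively weighted sum of the
squares `λ(p_{a,β})²`; among them are the `λ(x^β)²` with `|β| = κ`, not all zero because `λ` has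
order exactly `κ`.
-/

section ApplySecond

variable {d : ℕ} (lam : Module.Dual ℝ (MvPolynomial (Fin d) ℝ))

def applySecondLinear : MvPolynomial (Fin d ⊕ Fin d) ℝ →ₗ[ℝ] MvPolynomial (Fin d) ℝ :=
  Finsupp.lsum ℝ (fun mo => lam (monomial (ypart mo) 1) • monomial (xpart mo))
    ∘ₗ (AddMonoidAlgebra.coeffLinearEquiv ℝ).toLinearMap

theorem applySecondLinear_apply (f : MvPolynomial (Fin d ⊕ Fin d) ℝ) :
    applySecondLinear lam f = applySecond lam f := by
  refine Finset.sum_congr rfl fun mo _ => ?_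
  change lam _ • monomial _ (coeff mo f) = _
  rw [smul_monomial, smul_eq_mul, mul_comm]

theorem applySecond_monomial (m : (Fin d ⊕ Fin d) →₀ ℕ) (c : ℝ) :
    applySecond lam (monomial m c) = monomial (xpart m) (c * lam (monomial (ypart m) 1)) := by
  rw [← applySecondLinear_apply, applySecondLinear, LinearMap.comp_apply]
  exact (sum_monomial_eq (by simp)).trans <| by
    rw [LinearMap.smul_apply, smul_monomial, smul_eq_mul, mul_comm]

theorem xpart_mapDomain_add (α β : Fin d →₀ ℕ) :
    xpart (α.mapDomain Sum.inl + β.mapDomain Sum.inr) = α := by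
  ext i
  simp [xpart, Finsupp.mapDomain_apply Sum.inl_injective,
    Finsupp.mapDomain_of_notMem_range _ _ (by simp : Sum.inl i ∉ Set.range Sum.inr)]

theorem ypart_mapDomain_add (α β : Fin d →₀ ℕ) :
    ypart (α.mapDomain Sum.inl + β.mapDomain Sum.inr) = β := by
  ext i
  simp [ypart, Finsupp.mapDomain_apply Sum.inr_injective,
    Finsupp.mapDomain_of_notMem_range _ _ (by simp : Sum.inr i ∉ Set.range Sum.inl)]

theorem applySecond_rename_mul_rename (p q : MvPolynomial (Fin d) ℝ) :
    applySecond lam (rename Sum.inl p * rename Sum.inr q) = lam q • p := by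
  rw [← applySecondLinear_apply]
  induction p using MvPolynomial.induction_on' with
  | add p p' hp hp' => rw [map_add, add_mul, map_add, hp, hp', smul_add]
  | monomial α c =>
    induction q using MvPolynomial.induction_on' with
    | add q q' hq hq' => rw [map_add, mul_add, map_add, hq, hq', map_add, add_smul]
    | monomial β e =>
      have hlam : lam (monomial β e) = e * lam (monomial β 1) := by
        rw [← smul_eq_mul, ← map_smul, smul_monomial, smul_eq_mul, mul_one]
      rw [rename_monomial, rename_monomial, monomial_mul, applySecondLinear_apply,
        applySecond_monomial, xpart_mapDomain_add, ypart_mapDomain_add, hlam, smul_monomial,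
        smul_eq_mul]
      congr 1
      ring

end ApplySecond

theorem sum_pow_eq_sum_finsuppAntidiag {ι R : Type*} [Fintype ι] [DecidableEq ι] [CommSemiring R]
    (g : ι → R) (n : ℕ) :
    (∑ i, g i) ^ n = ∑ β ∈ finsuppAntidiag univ n, Nat.multinomial univ β * ∏ i, g i ^ β i := by
  rw [sum_pow_eq_sum_piAntidiag]
  refine sum_nbij' (fun f => Finsupp.equivFunOnFinite.symm f) (fun β => ⇑β) ?_ ?_
    (fun f _ => Finsupp.equivFunOnFinite.apply_symm_apply f)
    (fun β _ => Finsupp.equivFunOnFinite_symm_coe β) (fun _ _ => rfl)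
  · intro f hf
    simpa using (mem_piAntidiag.mp hf).1
  · intro β hβ
    simpa using (mem_finsuppAntidiag.mp hβ).1

section DistPoly

variable {d : ℕ}

theorem sum_sq_X_inl_sub_X_inr :
    (∑ i : Fin d, (X (Sum.inl i) - X (Sum.inr i)) ^ 2 : MvPolynomial (Fin d ⊕ Fin d) ℝ)
      = rename Sum.inl (∑ i, X i ^ 2) + rename Sum.inr (∑ i, X i ^ 2)
        - 2 * ∑ i : Fin d, X (Sum.inl i) * X (Sum.inr i) := by
  simp only [map_sum, map_pow, rename_X, mul_sum, ← sum_add_distrib, ← sum_sub_distrib]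
  exact sum_congr rfl fun i _ => by ring

theorem sum_X_inl_mul_X_inr_pow (b : ℕ) :
    (∑ i : Fin d, X (Sum.inl i) * X (Sum.inr i) : MvPolynomial (Fin d ⊕ Fin d) ℝ) ^ b
      = ∑ β ∈ finsuppAntidiag univ b, (Nat.multinomial univ β : ℝ) •
          (rename Sum.inl (monomial β 1) * rename Sum.inr (monomial β 1)) := by
  rw [sum_pow_eq_sum_finsuppAntidiag]
  refine sum_congr rfl fun β _ => ?_
  simp only [monomial_eq, C_1, one_mul, Finsupp.prod_pow, map_prod, map_pow, rename_X, mul_pow,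
    prod_mul_distrib, Nat.cast_smul_eq_nsmul, nsmul_eq_mul]

theorem distPoly_eq_sum (κ : ℕ) :
    distPoly d κ = ∑ b ∈ range (κ + 1), ∑ β ∈ finsuppAntidiag univ b, ∑ a ∈ range (κ - b + 1),
      ((-2 : ℝ) ^ b * Nat.multinomial univ β * κ.choose b * (κ - b).choose a) •
        (rename Sum.inl (pPoly d a β) * rename Sum.inr (pPoly d (κ - b - a) β)) := by
  rw [distPoly, sum_sq_X_inl_sub_X_inr, sub_eq_neg_add, add_pow]
  refine sum_congr rfl fun b _ => ?_
  rw [neg_pow, mul_pow, sum_X_inl_mul_X_inr_pow, add_pow]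
  simp only [mul_sum, sum_mul]
  rw [sum_comm]
  refine sum_congr rfl fun β _ => sum_congr rfl fun a _ => ?_
  simp only [pPoly, map_mul, map_pow, smul_eq_C_mul, map_natCast, map_neg, map_ofNat,
    neg_pow (2 : MvPolynomial _ ℝ)]
  ring

end DistPoly

theorem neg_two_pow_mul_multinomial_mul_choose_mul_choose {ι : Type*} [Fintype ι] {κ b k : ℕ}
    {β : ι →₀ ℕ} (hκ : κ = 2 * k + b) (hβ : ∑ i, β i = b) :
    (-2 : ℝ) ^ b * Nat.multinomial univ β * κ.choose b * (κ - b).choose k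
      = (-1) ^ κ * 2 ^ b * κ.factorial / (k.factorial : ℝ) ^ 2
          / ((β.prod fun _ e => e.factorial : ℕ) : ℝ) := by
  have hk : (κ - b).choose k * k.factorial * k.factorial = (κ - b).factorial := by
    simpa [show κ - b - k = k by omega] using
      Nat.choose_mul_factorial_mul_factorial (show k ≤ κ - b by omega)
  have hβ' : (∏ i, (β i).factorial) * Nat.multinomial univ β = b.factorial := by
    rw [Nat.multinomial_spec, hβ]
  have hb : κ.choose b * b.factorial * (κ - b).factorial = κ.factorial :=
    Nat.choose_mul_factorial_mul_factorial (by omega)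
  have hsign : (-2 : ℝ) ^ b = (-1) ^ κ * 2 ^ b := by
    rw [hκ, pow_add, pow_mul, neg_one_sq, one_pow, one_mul, neg_pow]
  rw [Finsupp.prod_fintype _ _ fun _ => rfl, hsign, ← hb, ← hk, ← hβ']
  push_cast
  field_simp

theorem degree_eq_of_mem_finsuppAntidiag {ι : Type*} [Fintype ι] [DecidableEq ι] {b : ℕ}
    {β : ι →₀ ℕ}
    (hβ : β ∈ finsuppAntidiag univ b) : β.degree = b := by
  rw [Finsupp.degree_eq_sum, (mem_finsuppAntidiag.mp hβ).1]

theorem sum_range_ite_two_mul_add_eq {M : Type*} [AddCommMonoid M] (f : ℕ → M) {b κ : ℕ}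
    (hb : b ≤ κ) :
    ∑ a ∈ range (κ - b + 1), (if κ = 2 * a + b then f a else 0)
      = if Even (κ - b) then f ((κ - b) / 2) else 0 := by
  split_ifs with heven
  · rw [sum_eq_single_of_mem ((κ - b) / 2) (mem_range.mpr (by omega)), if_pos]
    · obtain ⟨k, hk⟩ := heven
      omega
    · exact fun a _ ha => if_neg (by rintro rfl; omega)
  · exact sum_eq_zero fun a _ => if_neg fun h => heven ⟨a, by omega⟩

section Leading

variable {d : ℕ}

theorem pPoly_isHomogeneous (a : ℕ) (β : Fin d →₀ ℕ) :
    (pPoly d a β).IsHomogeneous (2 * a + β.degree) :=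
  ((IsHomogeneous.sum _ _ _ fun i _ => (isHomogeneous_X ℝ i).pow 2).pow a).mul
    (isHomogeneous_monomial _ rfl)

theorem homogeneousComponent_pPoly (n a : ℕ) (β : Fin d →₀ ℕ) :
    homogeneousComponent n (pPoly d a β) = if n = 2 * a + β.degree then pPoly d a β else 0 :=
  homogeneousComponent_of_mem (pPoly_isHomogeneous a β)

theorem applySecond_distPoly (lam : Module.Dual ℝ (MvPolynomial (Fin d) ℝ)) (κ : ℕ) :
    applySecond lam (distPoly d κ)
      = ∑ b ∈ range (κ + 1), ∑ β ∈ finsuppAntidiag univ b, ∑ a ∈ range (κ - b + 1),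
        ((-2 : ℝ) ^ b * Nat.multinomial univ β * κ.choose b * (κ - b).choose a
          * lam (pPoly d (κ - b - a) β)) • pPoly d a β := by
  rw [distPoly_eq_sum, ← applySecondLinear_apply]
  simp only [map_sum, map_smul, applySecondLinear_apply, applySecond_rename_mul_rename, smul_smul]

def schabackLeading (d κ : ℕ) (lam : Module.Dual ℝ (MvPolynomial (Fin d) ℝ)) :
    MvPolynomial (Fin d) ℝ :=
  ∑ b ∈ (range (κ + 1)).filter (fun b => Even (κ - b)),
      ((-1 : ℝ) ^ κ * 2 ^ b * (κ.factorial : ℝ) / (((κ - b) / 2).factorial : ℝ) ^ 2) •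
        ∑ β ∈ finsuppAntidiag (univ : Finset (Fin d)) b,
          (lam (pPoly d ((κ - b) / 2) β) / ((β.prod fun _ e => e.factorial : ℕ) : ℝ)) •
            pPoly d ((κ - b) / 2) β

theorem homogeneousComponent_applySecond_distPoly
    (lam : Module.Dual ℝ (MvPolynomial (Fin d) ℝ)) (κ : ℕ) :
    homogeneousComponent κ (applySecond lam (distPoly d κ)) = schabackLeading d κ lam := by
  rw [applySecond_distPoly, schabackLeading, sum_filter]
  simp only [map_sum, map_smul, homogeneousComponent_pPoly, smul_ite, smul_zero]
  refine sum_congr rfl fun b hb => ?_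
  have hbκ : b ≤ κ := Nat.lt_succ_iff.mp (mem_range.mp hb)
  rw [sum_congr rfl fun β hβ => by
      rw [degree_eq_of_mem_finsuppAntidiag hβ, sum_range_ite_two_mul_add_eq _ hbκ], sum_ite_irrel,
    sum_const_zero]
  split_ifs with heven
  · rw [smul_sum]
    refine sum_congr rfl fun β hβ => ?_
    obtain ⟨k, hk⟩ := heven
    have hk2 : (κ - b) / 2 = k := by omega
    rw [hk2, show κ - b - k = k by omega, smul_smul,
      neg_two_pow_mul_multinomial_mul_choose_mul_choose (by omega)
        (mem_finsuppAntidiag.mp hβ).1]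
    congr 1
    ring
  · rfl

end Leading

section Nonvanishing

variable {d κ : ℕ} {lam : Module.Dual ℝ (MvPolynomial (Fin d) ℝ)}

theorem exists_monomial_apply_ne_zero (hvan : VanishesLT lam κ)
    (horder : ¬ VanishesLT lam (κ + 1)) :
    ∃ β ∈ finsuppAntidiag univ κ, lam (monomial β 1) ≠ 0 := by
  obtain ⟨p, hp, hlp⟩ : ∃ p, p.totalDegree ≤ κ ∧ lam p ≠ 0 := by
    simpa [VanishesLT, Nat.lt_succ_iff] using horder
  rw [← p.support_sum_monomial_coeff, map_sum] at hlp
  obtain ⟨m, hm, hlm⟩ := exists_ne_zero_of_sum_ne_zero hlp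
  have hlm' : lam (monomial m 1) ≠ 0 := by
    rw [← mul_one (coeff m p), ← smul_eq_mul, ← smul_monomial, map_smul] at hlm
    exact right_ne_zero_of_smul hlm
  refine ⟨m, mem_finsuppAntidiag.mpr ⟨?_, subset_univ _⟩, hlm'⟩
  have hle : m.degree ≤ κ := (le_totalDegree hm).trans hp
  have hge : ¬ m.degree < κ := fun hlt =>
    hlm' (hvan _ (by rwa [totalDegree_monomial _ one_ne_zero]))
  rw [← Finsupp.degree_eq_sum]
  omega

theorem apply_schabackLeading :
    lam (schabackLeading d κ lam) = (-1) ^ κ *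
      ∑ b ∈ (range (κ + 1)).filter (fun b => Even (κ - b)),
        2 ^ b * (κ.factorial : ℝ) / (((κ - b) / 2).factorial : ℝ) ^ 2 *
          ∑ β ∈ finsuppAntidiag univ b,
            lam (pPoly d ((κ - b) / 2) β) ^ 2 / ((β.prod fun _ e => e.factorial : ℕ) : ℝ) := by
  simp only [schabackLeading, map_sum, map_smul, smul_eq_mul, mul_sum]
  refine sum_congr rfl fun b _ => sum_congr rfl fun β _ => ?_
  ring

theorem schabackLeading_ne_zero (hvan : VanishesLT lam κ) (horder : ¬ VanishesLT lam (κ + 1)) :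
    schabackLeading d κ lam ≠ 0 := by
  obtain ⟨β₀, hβ₀, hlam⟩ := exists_monomial_apply_ne_zero hvan horder
  have hfact (β : Fin d →₀ ℕ) : (0 : ℝ) < (β.prod fun _ e => e.factorial : ℕ) := by
    exact_mod_cast Nat.pos_of_ne_zero <|
      Finsupp.prod_ne_zero_iff.mpr fun i _ => Nat.factorial_ne_zero _
  intro h
  have h0 := apply_schabackLeading (lam := lam) (κ := κ)
  rw [h, map_zero, eq_comm, mul_eq_zero, or_iff_right (pow_ne_zero _ (by norm_num))] at h0
  refine (sum_pos' (fun b _ => mul_nonneg (by positivity) (sum_nonneg fun β _ => ?_))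
    ⟨κ, by simp, mul_pos (by positivity) (sum_pos' (fun β _ => ?_) ⟨β₀, hβ₀, ?_⟩)⟩).ne' h0
  · exact div_nonneg (sq_nonneg _) (hfact β).le
  · exact div_nonneg (sq_nonneg _) (hfact β).le
  · rw [Nat.sub_self, Nat.zero_div, pPoly, pow_zero, one_mul]
    exact div_pos (sq_pos_of_ne_zero hlam) (hfact β₀)

end Nonvanishing

theorem schaback_w_leading_term_general (d κ : ℕ)
    (lam : Module.Dual ℝ (MvPolynomial (Fin d) ℝ))
    (hvan : VanishesLT lam κ) (horder : ¬ VanishesLT lam (κ + 1))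
    (L : MvPolynomial (Fin d) ℝ)
    (hL : L = ∑ b ∈ (range (κ + 1)).filter (fun b => Even (κ - b)),
      ((-1 : ℝ) ^ κ * 2 ^ b * (κ.factorial : ℝ) / (((κ - b) / 2).factorial : ℝ) ^ 2) •
        ∑ β ∈ finsuppAntidiag (univ : Finset (Fin d)) b,
          (lam (pPoly d ((κ - b) / 2) β) / ((β.prod fun _ e => e.factorial : ℕ) : ℝ)) •
            ((∑ i : Fin d, X i ^ 2) ^ ((κ - b) / 2) * monomial β 1)) :
    MvPolynomial.homogeneousComponent κ (applySecond lam (distPoly d κ)) = L ∧ L ≠ 0 := by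
  subst hL
  exact ⟨homogeneousComponent_applySecond_distPoly lam κ, schabackLeading_ne_zero hvan horder⟩

/-- For a nonzero functional `λ` of order `κ`, the degree-`κ` homogeneous (leading) part of
Schaback's polynomial `w : x ↦ λ‖x−·‖^(2κ)` is
`(−1)^κ ∑_{κ−b even} 2^b κ!/(((κ−b)/2)!)² ∑_{|β|=b} (λ p_{(κ−b)/2,β}) ‖x‖^(κ−b) x^β / β!`,
and this homogeneous polynomial of degree `κ` is nonzero (so `deg w = κ`). -/
theorem schaback_w_leading_term (d κ : ℕ)
    (lam : Module.Dual ℝ (MvPolynomial (Fin d) ℝ)) (hlam : lam ≠ 0)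
    (hvan : VanishesLT lam κ) (horder : ¬ VanishesLT lam (κ + 1))
    (L : MvPolynomial (Fin d) ℝ)
    (hL : L = ∑ b ∈ (range (κ + 1)).filter (fun b => Even (κ - b)),
      ((-1 : ℝ) ^ κ * 2 ^ b * (κ.factorial : ℝ) / (((κ - b) / 2).factorial : ℝ) ^ 2) •
        ∑ β ∈ finsuppAntidiag (univ : Finset (Fin d)) b,
          (lam (pPoly d ((κ - b) / 2) β) / ((β.prod fun _ e => e.factorial : ℕ) : ℝ)) •
            ((∑ i : Fin d, X i ^ 2) ^ ((κ - b) / 2) * monomial β 1)) :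
    MvPolynomial.homogeneousComponent κ (applySecond lam (distPoly d κ)) = L ∧ L ≠ 0 :=
  schaback_w_leading_term_general d κ lam hvan horder L hL
end
end
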